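/- Let Σ, C be K×K positive definite matrices with C − Σ positive semi-definite, and M a random binary vector with P(M = 1_K) > 0. Then e_K^T (E[V_M(C)]^{-1} − E[V_M(Σ)]^{-1}) e_K ≥ e_K^T (C − Σ) e_K. -/

import Mathlib

open Matrix BigOperators Finset

/-- The `K × n_m` selection matrix `D_m` whose columns are the standard basis vectors
`e_t` for the indices `t` with `m t = true` (columns indexed by the subtype of such `t`). -/
noncomputable def selMat (K : ℕ) (m : Fin K → Bool) :
    Matrix (Fin K) {t : Fin K // m t = true} ℝ :=
  Matrix.of fun i j => if i = (j : Fin K) then 1 else 0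

/-- `V_m(Σ) = D_m (D_mᵀ Σ D_m)⁻¹ D_mᵀ`.  When `m = 0` the column index type is empty,
so this is the zero matrix, matching the convention `V_0(Σ) = 0`. -/
noncomputable def Vm (K : ℕ) (S : Matrix (Fin K) (Fin K) ℝ) (m : Fin K → Bool) :
    Matrix (Fin K) (Fin K) ℝ :=
  selMat K m * ((selMat K m)ᵀ * S * selMat K m)⁻¹ * (selMat K m)ᵀ

/-- `E[V_M(Σ)] = ∑ m P(M = m) V_m(Σ)`. -/
noncomputable def EVm (K : ℕ) (S : Matrix (Fin K) (Fin K) ℝ)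
    (p : (Fin K → Bool) → ℝ) : Matrix (Fin K) (Fin K) ℝ :=
  ∑ m : Fin K → Bool, p m • Vm K S m

/-!
Write `V_D(B) = D (Dᵀ B D)⁻¹ Dᵀ` (the `compression_*` lemmas). For `B` positive definite, the
quadratic form of `V_D(B)` is dual to `u ↦ uᵀ B u` on the range of `D`:
`xᵀ V_D(B) x = max_y (2 (D y)ᵀ x - (D y)ᵀ B (D y))`. Dualising once more,
`eᵀ E[V_M(B)]⁻¹ e` is the minimum of `∑ₘ pₘ uₘᵀ B uₘ` over families `uₘ = D_m yₘ` with
`∑ₘ pₘ uₘ = e`, attained at `uₘ = V_m(B) E[V_M(B)]⁻¹ e`. The minimiser for `C` is feasible for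
`S`, so the difference of the two minima is at least `∑ₘ pₘ uₘᵀ (C - S) uₘ`, which by Jensen's
inequality is at least `eᵀ (C - S) e`.
-/

namespace Matrix.PosSemidef

variable {ι : Type*} [Fintype ι] {G : Matrix ι ι ℝ}

lemma two_mul_dotProduct_mulVec_sub_le (hG : G.PosSemidef) (y w : ι → ℝ) :
    2 * (y ⬝ᵥ (G *ᵥ w)) - w ⬝ᵥ (G *ᵥ w) ≤ y ⬝ᵥ (G *ᵥ y) := by
  have hsymm : w ⬝ᵥ (G *ᵥ y) = y ⬝ᵥ (G *ᵥ w) := by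
    rw [dotProduct_mulVec, ← mulVec_transpose, ← conjTranspose_eq_transpose_of_trivial,
      hG.isHermitian.eq, dotProduct_comm]
  have hnonneg := hG.dotProduct_mulVec_nonneg (y - w)
  simp only [star_trivial, mulVec_sub, dotProduct_sub, sub_dotProduct] at hnonneg
  linarith

lemma dotProduct_mulVec_sum_le {α : Type*} [Fintype α] (hG : G.PosSemidef) {p : α → ℝ}
    (hp0 : ∀ a, 0 ≤ p a) (hp1 : ∑ a, p a = 1) (z : α → ι → ℝ) :
    (∑ a, p a • z a) ⬝ᵥ (G *ᵥ ∑ a, p a • z a) ≤ ∑ a, p a * (z a ⬝ᵥ (G *ᵥ z a)) := by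
  set zbar := ∑ a, p a • z a
  have hmean : ∑ a, p a * (z a ⬝ᵥ (G *ᵥ zbar)) = zbar ⬝ᵥ (G *ᵥ zbar) := by
    simp only [zbar, sum_dotProduct, smul_dotProduct, smul_eq_mul]
  calc zbar ⬝ᵥ (G *ᵥ zbar)
      = ∑ a, p a * (2 * (z a ⬝ᵥ (G *ᵥ zbar)) - zbar ⬝ᵥ (G *ᵥ zbar)) := by
        simp only [mul_sub, Finset.sum_sub_distrib, mul_left_comm _ (2 : ℝ), ← Finset.mul_sum,
          ← Finset.sum_mul, hmean, hp1]
        ring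
    _ ≤ ∑ a, p a * (z a ⬝ᵥ (G *ᵥ z a)) := Finset.sum_le_sum fun a _ =>
        mul_le_mul_of_nonneg_left (hG.two_mul_dotProduct_mulVec_sub_le _ _) (hp0 a)

end Matrix.PosSemidef

section Compression

variable {ι κ : Type*} [Fintype ι] [Fintype κ] (D : Matrix ι κ ℝ) {B : Matrix ι ι ℝ}

lemma dotProduct_mulVec_transpose_mul_mul (y : κ → ℝ) :
    (D *ᵥ y) ⬝ᵥ (B *ᵥ (D *ᵥ y)) = y ⬝ᵥ ((Dᵀ * B * D) *ᵥ y) := by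
  rw [← mulVec_mulVec, ← mulVec_mulVec, dotProduct_mulVec y, vecMul_transpose,
    dotProduct_comm]

variable [DecidableEq κ]

lemma compression_mulVec (x : ι → ℝ) :
    (D * (Dᵀ * B * D)⁻¹ * Dᵀ) *ᵥ x = D *ᵥ ((Dᵀ * B * D)⁻¹ *ᵥ (Dᵀ *ᵥ x)) := by
  simp only [mulVec_mulVec, Matrix.mul_assoc]

lemma dotProduct_compression_mulVec (hG : IsUnit (Dᵀ * B * D)) (x : ι → ℝ) (y : κ → ℝ) :
    (D *ᵥ y) ⬝ᵥ x = y ⬝ᵥ ((Dᵀ * B * D) *ᵥ ((Dᵀ * B * D)⁻¹ *ᵥ (Dᵀ *ᵥ x))) := by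
  rw [mulVec_mulVec, mul_nonsing_inv _ ((isUnit_iff_isUnit_det _).mp hG), one_mulVec,
    dotProduct_comm, dotProduct_mulVec, mulVec_transpose, dotProduct_comm]

lemma dotProduct_mulVec_compression (hG : IsUnit (Dᵀ * B * D)) (x : ι → ℝ) :
    x ⬝ᵥ ((D * (Dᵀ * B * D)⁻¹ * Dᵀ) *ᵥ x)
      = ((D * (Dᵀ * B * D)⁻¹ * Dᵀ) *ᵥ x) ⬝ᵥ (B *ᵥ ((D * (Dᵀ * B * D)⁻¹ * Dᵀ) *ᵥ x)) := by
  rw [compression_mulVec, dotProduct_mulVec_transpose_mul_mul, dotProduct_comm,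
    dotProduct_compression_mulVec D hG]

lemma two_mul_dotProduct_sub_le_compression (hB : B.PosSemidef) (hG : IsUnit (Dᵀ * B * D))
    (x : ι → ℝ) (y : κ → ℝ) :
    2 * ((D *ᵥ y) ⬝ᵥ x) - x ⬝ᵥ ((D * (Dᵀ * B * D)⁻¹ * Dᵀ) *ᵥ x)
      ≤ (D *ᵥ y) ⬝ᵥ (B *ᵥ (D *ᵥ y)) := by
  have hGpsd : (Dᵀ * B * D).PosSemidef := by
    simpa only [conjTranspose_eq_transpose_of_trivial] using hB.conjTranspose_mul_mul_same D
  have hV : x ⬝ᵥ ((D * (Dᵀ * B * D)⁻¹ * Dᵀ) *ᵥ x)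
      = ((Dᵀ * B * D)⁻¹ *ᵥ (Dᵀ *ᵥ x)) ⬝ᵥ ((Dᵀ * B * D) *ᵥ ((Dᵀ * B * D)⁻¹ *ᵥ (Dᵀ *ᵥ x))) := by
    rw [dotProduct_mulVec_compression D hG, compression_mulVec,
      dotProduct_mulVec_transpose_mul_mul]
  rw [hV, dotProduct_compression_mulVec D hG, dotProduct_mulVec_transpose_mul_mul D y]
  exact hGpsd.two_mul_dotProduct_mulVec_sub_le _ _

lemma compression_posSemidef (hB : B.PosSemidef) : (D * (Dᵀ * B * D)⁻¹ * Dᵀ).PosSemidef := by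
  simpa only [conjTranspose_eq_transpose_of_trivial] using
    (hB.conjTranspose_mul_mul_same D).inv.mul_mul_conjTranspose_same D

lemma compression_eq_inv [DecidableEq ι] (hD₁ : Dᵀ * D = 1) (hD₂ : D * Dᵀ = 1)
    (hB : IsUnit B.det) :
    D * (Dᵀ * B * D)⁻¹ * Dᵀ = B⁻¹ := by
  have hinv : (Dᵀ * B * D)⁻¹ = Dᵀ * B⁻¹ * D := by
    refine inv_eq_left_inv ?_
    calc Dᵀ * B⁻¹ * D * (Dᵀ * B * D) = Dᵀ * B⁻¹ * (D * Dᵀ) * B * D := by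
          simp only [Matrix.mul_assoc]
      _ = 1 := by rw [hD₂, Matrix.mul_one, nonsing_inv_mul_cancel_right _ _ hB, hD₁]
  rw [hinv]
  calc D * (Dᵀ * B⁻¹ * D) * Dᵀ = (D * Dᵀ) * B⁻¹ * (D * Dᵀ) := by simp only [Matrix.mul_assoc]
    _ = B⁻¹ := by rw [hD₂, Matrix.one_mul, Matrix.mul_one]

end Compression

section Selection

variable {K : ℕ} {B : Matrix (Fin K) (Fin K) ℝ} {p : (Fin K → Bool) → ℝ}

lemma selMat_transpose_mul_self (m : Fin K → Bool) : (selMat K m)ᵀ * selMat K m = 1 := by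
  ext a b
  simp [selMat, Matrix.mul_apply, Matrix.one_apply, Subtype.ext_iff, eq_comm]

lemma selMat_mul_transpose_self_true :
    selMat K (fun _ => true) * (selMat K fun _ => true)ᵀ = 1 := by
  ext i j
  rw [Matrix.mul_apply, Fintype.sum_eq_single ⟨j, rfl⟩ fun a ha => ?_]
  · simp [selMat, Matrix.one_apply]
  · simp [selMat, Ne.symm (Subtype.coe_ne_coe.mpr ha)]

lemma injective_selMat_mulVec (m : Fin K → Bool) : Function.Injective (selMat K m).mulVec :=
  Function.LeftInverse.injective (g := (selMat K m)ᵀ.mulVec) fun y => by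
    rw [mulVec_mulVec, selMat_transpose_mul_self, one_mulVec]

lemma isUnit_selMat_transpose_mul_mul (hB : B.PosDef) (m : Fin K → Bool) :
    IsUnit ((selMat K m)ᵀ * B * selMat K m) := by
  simpa only [conjTranspose_eq_transpose_of_trivial] using
    (hB.conjTranspose_mul_mul_same (injective_selMat_mulVec m)).isUnit

lemma Vm_true (hB : B.PosDef) : Vm K B (fun _ => true) = B⁻¹ :=
  compression_eq_inv _ (selMat_transpose_mul_self _) selMat_mul_transpose_self_true
    ((isUnit_iff_isUnit_det _).mp hB.isUnit)

lemma EVm_posDef (hB : B.PosDef) (hp0 : ∀ m, 0 ≤ p m) (hfull : 0 < p fun _ => true) :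
    (EVm K B p).PosDef := by
  rw [EVm, Fintype.sum_eq_add_sum_compl (fun _ => true), Vm_true hB]
  exact (hB.inv.smul hfull).add_posSemidef <| posSemidef_sum _ fun m _ =>
    (compression_posSemidef _ hB.posSemidef).smul (hp0 m)

lemma dotProduct_EVm_mulVec (x : Fin K → ℝ) :
    x ⬝ᵥ (EVm K B p *ᵥ x) = ∑ m, p m * (x ⬝ᵥ (Vm K B m *ᵥ x)) := by
  simp only [EVm, sum_mulVec, dotProduct_sum, smul_mulVec, dotProduct_smul, smul_eq_mul]

theorem isLeast_EVm_inv (hB : B.PosDef) (hp0 : ∀ m, 0 ≤ p m) (hfull : 0 < p fun _ => true)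
    (e : Fin K → ℝ) :
    IsLeast ((fun y : (m : Fin K → Bool) → {t // m t = true} → ℝ =>
        ∑ m, p m * ((selMat K m *ᵥ y m) ⬝ᵥ (B *ᵥ (selMat K m *ᵥ y m)))) ''
      {y | ∑ m, p m • (selMat K m *ᵥ y m) = e})
      (e ⬝ᵥ ((EVm K B p)⁻¹ *ᵥ e)) := by
  set x := (EVm K B p)⁻¹ *ᵥ e
  have hx : EVm K B p *ᵥ x = e := by
    rw [mulVec_mulVec, mul_nonsing_inv _
      ((isUnit_iff_isUnit_det _).mp (EVm_posDef hB hp0 hfull).isUnit), one_mulVec]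
  have hval : e ⬝ᵥ x = x ⬝ᵥ (EVm K B p *ᵥ x) := by rw [hx, dotProduct_comm]
  have hG := isUnit_selMat_transpose_mul_mul hB
  refine ⟨⟨fun m => ((selMat K m)ᵀ * B * selMat K m)⁻¹ *ᵥ ((selMat K m)ᵀ *ᵥ x), ?_, ?_⟩, ?_⟩
  · rw [Set.mem_ofPred_eq, ← hx, EVm, sum_mulVec]
    refine Finset.sum_congr rfl fun m _ => ?_
    rw [smul_mulVec, Vm, compression_mulVec]
  · rw [hval, dotProduct_EVm_mulVec]
    refine Finset.sum_congr rfl fun m _ => ?_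
    rw [Vm, dotProduct_mulVec_compression _ (hG m), compression_mulVec]
  · rintro _ ⟨y, hy, rfl⟩
    have hlin : ∑ m, p m * ((selMat K m *ᵥ y m) ⬝ᵥ x) = e ⬝ᵥ x := by
      rw [← hy, sum_dotProduct]
      simp only [smul_dotProduct, smul_eq_mul]
    calc e ⬝ᵥ x = ∑ m, p m * (2 * ((selMat K m *ᵥ y m) ⬝ᵥ x) - x ⬝ᵥ (Vm K B m *ᵥ x)) := by
          simp only [mul_sub, Finset.sum_sub_distrib, mul_left_comm _ (2 : ℝ), ← Finset.mul_sum,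
            hlin, ← dotProduct_EVm_mulVec, ← hval]
          ring
      _ ≤ _ := Finset.sum_le_sum fun m _ => mul_le_mul_of_nonneg_left
          (two_mul_dotProduct_sub_le_compression _ hB.posSemidef (hG m) x (y m)) (hp0 m)

end Selection

theorem dotProduct_mulVec_sub_le_EVm_inv_sub {K : ℕ} {S C : Matrix (Fin K) (Fin K) ℝ}
    (hS : S.PosDef) (hCS : (C - S).PosSemidef) {p : (Fin K → Bool) → ℝ} (hp0 : ∀ m, 0 ≤ p m)
    (hp1 : ∑ m, p m = 1) (hfull : 0 < p fun _ => true) (e : Fin K → ℝ) :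
    e ⬝ᵥ ((C - S) *ᵥ e) ≤ e ⬝ᵥ (((EVm K C p)⁻¹ - (EVm K S p)⁻¹) *ᵥ e) := by
  have hC : C.PosDef := by simpa using hS.add_posSemidef hCS
  obtain ⟨⟨y, hy, hCy⟩, -⟩ := isLeast_EVm_inv hC hp0 hfull e
  have hSy := (isLeast_EVm_inv hS hp0 hfull e).2 ⟨y, hy, rfl⟩
  have hJ := hCS.dotProduct_mulVec_sum_le hp0 hp1 fun m => selMat K m *ᵥ y m
  rw [Set.mem_ofPred_eq.mp hy] at hJ
  simp only [sub_mulVec, dotProduct_sub, mul_sub, Finset.sum_sub_distrib] at hJ ⊢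
  linarith

theorem stmt7_general (K : ℕ)
    (S C : Matrix (Fin (K+1)) (Fin (K+1)) ℝ) (hS : S.PosDef)
    (hCS : (C - S).PosSemidef)
    (p : (Fin (K+1) → Bool) → ℝ) (hp0 : ∀ m, 0 ≤ p m) (hp1 : ∑ m, p m = 1)
    (hfull : 0 < p (fun _ => true)) :
    (C - S) (Fin.last K) (Fin.last K)
      ≤ ((EVm (K+1) C p)⁻¹ - (EVm (K+1) S p)⁻¹) (Fin.last K) (Fin.last K) := by
  simpa only [mulVec_single_one, single_one_dotProduct, col_apply] using
    dotProduct_mulVec_sub_le_EVm_inv_sub hS hCS hp0 hp1 hfull (Pi.single (Fin.last K) 1)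

/-- Lemma 1(5): if `Σ`, `C` are positive definite with `C − Σ` positive
semi-definite and `M` is a random binary vector with `P(M = 1_K) > 0`, then
`e_Kᵀ (E[V_M(C)]⁻¹ − E[V_M(Σ)]⁻¹) e_K ≥ e_Kᵀ (C − Σ) e_K`. -/
theorem stmt7 (K : ℕ)
    (S C : Matrix (Fin (K+1)) (Fin (K+1)) ℝ) (hS : S.PosDef) (hC : C.PosDef)
    (hCS : (C - S).PosSemidef)
    (p : (Fin (K+1) → Bool) → ℝ) (hp0 : ∀ m, 0 ≤ p m) (hp1 : ∑ m, p m = 1)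
    (hfull : 0 < p (fun _ => true)) :
    (C - S) (Fin.last K) (Fin.last K)
      ≤ ((EVm (K+1) C p)⁻¹ - (EVm (K+1) S p)⁻¹) (Fin.last K) (Fin.last K) :=
  stmt7_general K S C hS hCS p hp0 hp1 hfull
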